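/- arXiv:2002.11598 — 3 statements merged into one kernel-verified Lean document; each statement's English description precedes it below -/
import Mathlib

section
/- Let n ≥ 1, ξ ∈ ℝⁿ a unit vector, τ ∈ ℝ with τ ≠ 0, V : ℝ^{1+n} → ℝ continuous, and let v₀, v₁, v₂ : ℝ^{1+n} → ℂ be of class C². Set φ(t,x) = −t + ξ·x and suppose the transport equations hold: ∂_t v₀ + ξ·∇_x v₀ = 0, and −2i(∂_t v_k + ξ·∇_x v_k) + (□ + V)v_{k−1} = 0 for k = 1, 2. Then with v = v₀ + τ^{−1} v₁ + τ^{−2} v₂ one has, for all (t,x): (□ + V)(e^{iτφ} v)(t,x) = τ^{−2} e^{iτφ(t,x)} ((□ + V)v₂)(t,x). -/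
open Real

open scoped RealInnerProductSpace

/-- Partial derivative in the time variable of a function on `ℝ × ℝⁿ`. -/
noncomputable def partialT {n : ℕ} (u : ℝ × EuclideanSpace ℝ (Fin n) → ℂ) :
    ℝ × EuclideanSpace ℝ (Fin n) → ℂ :=
  fun p => fderiv ℝ u p (1, 0)

/-- Partial derivative in the `j`-th spatial variable of a function on `ℝ × ℝⁿ`. -/
noncomputable def partialX {n : ℕ} (j : Fin n) (u : ℝ × EuclideanSpace ℝ (Fin n) → ℂ) :
    ℝ × EuclideanSpace ℝ (Fin n) → ℂ :=
  fun p => fderiv ℝ u p (0, EuclideanSpace.single j 1)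

/-- The d'Alembert (wave) operator `□ = ∂_t² − Δ_x` on `ℝ × ℝⁿ`. -/
noncomputable def waveOp {n : ℕ} (u : ℝ × EuclideanSpace ℝ (Fin n) → ℂ) :
    ℝ × EuclideanSpace ℝ (Fin n) → ℂ :=
  fun p => partialT (partialT u) p - ∑ j : Fin n, partialX j (partialX j u) p

/-! The phase `φ(t, x) = -t + ξ·x` is characteristic for `□` when `|ξ| = 1`: conjugating by the
plane wave `e^{iτφ}` gives `(□ + V)(e^{iτφ} u) = e^{iτφ} (-2iτ (∂_t + ξ·∇_x) u + (□ + V) u)`, the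
`τ²` term `(∂_t φ)² - |∇_x φ|² = 1 - |ξ|²` vanishing. Expanding `u = v₀ + τ⁻¹ v₁ + τ⁻² v₂` by
linearity, the transport equations cancel every power of `τ` except `τ⁻² (□ + V) v₂`. -/

section DirectionalDerivative

variable {E : Type*} [NormedAddCommGroup E] [NormedSpace ℝ E]

lemma fderiv_add_const_mul_apply {f g : E → ℂ} {p : E} (a : ℂ)
    (hf : DifferentiableAt ℝ f p) (hg : DifferentiableAt ℝ g p) (w : E) :
    fderiv ℝ (fun q => f q + a * g q) p w = fderiv ℝ f p w + a * fderiv ℝ g p w := by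
  rw [fderiv_fun_add hf (hg.const_mul a), fderiv_const_mul hg a]
  rfl

lemma ContDiff.differentiable_fderiv_apply {F : Type*} [NormedAddCommGroup F] [NormedSpace ℝ F]
    {u : E → F} (hu : ContDiff ℝ 2 u) (w : E) :
    Differentiable ℝ (fun p => fderiv ℝ u p w) :=
  ((hu.fderiv_right (m := 1) le_rfl).clm_apply contDiff_const).differentiable one_ne_zero

lemma fderiv_fderiv_add_const_mul_apply {f g : E → ℂ} (a : ℂ)
    (hf : ContDiff ℝ 2 f) (hg : ContDiff ℝ 2 g) (w w' p : E) :
    fderiv ℝ (fun q => fderiv ℝ (fun r => f r + a * g r) q w) p w'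
      = fderiv ℝ (fun q => fderiv ℝ f q w) p w' + a * fderiv ℝ (fun q => fderiv ℝ g q w) p w' := by
  have hf' := hf.differentiable two_ne_zero
  have hg' := hg.differentiable two_ne_zero
  simp only [fderiv_add_const_mul_apply a (hf' _) (hg' _)]
  exact fderiv_add_const_mul_apply a (hf.differentiable_fderiv_apply w p)
    (hg.differentiable_fderiv_apply w p) w'

lemma fderiv_cexp_mul_apply (L : E →L[ℝ] ℂ) {u : E → ℂ} {p : E}
    (hu : DifferentiableAt ℝ u p) (w : E) :
    fderiv ℝ (fun q => Complex.exp (L q) * u q) p w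
      = Complex.exp (L p) * (L w * u p + fderiv ℝ u p w) := by
  rw [(L.hasFDerivAt.cexp.fun_mul hu.hasFDerivAt).fderiv]
  simp only [add_apply, smul_apply, smul_eq_mul]
  ring

lemma fderiv_fderiv_cexp_mul_apply (L : E →L[ℝ] ℂ) {u : E → ℂ} (hu : ContDiff ℝ 2 u)
    (w w' p : E) :
    fderiv ℝ (fun q => fderiv ℝ (fun r => Complex.exp (L r) * u r) q w) p w'
      = Complex.exp (L p) * (L w' * L w * u p + L w' * fderiv ℝ u p w
          + L w * fderiv ℝ u p w' + fderiv ℝ (fun q => fderiv ℝ u q w) p w') := by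
  have hu' := hu.differentiable two_ne_zero
  have hdu := hu.differentiable_fderiv_apply w p
  simp only [fderiv_cexp_mul_apply L (hu' _)]
  rw [fderiv_cexp_mul_apply L (((hu' p).const_mul _).fun_add hdu),
    fderiv_fun_add ((hu' p).const_mul _) hdu, fderiv_const_mul (hu' p)]
  simp only [add_apply, smul_apply, smul_eq_mul]
  ring

end DirectionalDerivative

section WaveOperator

variable {n : ℕ}

noncomputable def transportOp (ξ : EuclideanSpace ℝ (Fin n))
    (u : ℝ × EuclideanSpace ℝ (Fin n) → ℂ) :
    ℝ × EuclideanSpace ℝ (Fin n) → ℂ :=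
  fun p => partialT u p + ∑ j : Fin n, (ξ j : ℂ) * partialX j u p

section Linearity

variable {f g : ℝ × EuclideanSpace ℝ (Fin n) → ℂ} (a : ℂ)

lemma partialT_add_const_mul {p : ℝ × EuclideanSpace ℝ (Fin n)}
    (hf : DifferentiableAt ℝ f p) (hg : DifferentiableAt ℝ g p) :
    partialT (fun q => f q + a * g q) p = partialT f p + a * partialT g p :=
  fderiv_add_const_mul_apply a hf hg _

lemma partialX_add_const_mul (j : Fin n) {p : ℝ × EuclideanSpace ℝ (Fin n)}
    (hf : DifferentiableAt ℝ f p) (hg : DifferentiableAt ℝ g p) :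
    partialX j (fun q => f q + a * g q) p = partialX j f p + a * partialX j g p :=
  fderiv_add_const_mul_apply a hf hg _

lemma transportOp_add_const_mul (ξ : EuclideanSpace ℝ (Fin n)) {p : ℝ × EuclideanSpace ℝ (Fin n)}
    (hf : DifferentiableAt ℝ f p) (hg : DifferentiableAt ℝ g p) :
    transportOp ξ (fun q => f q + a * g q) p = transportOp ξ f p + a * transportOp ξ g p := by
  simp only [transportOp, partialT_add_const_mul a hf hg, partialX_add_const_mul a _ hf hg,
    mul_add, Finset.sum_add_distrib, mul_left_comm _ a, ← Finset.mul_sum]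
  ring

lemma waveOp_add_const_mul (hf : ContDiff ℝ 2 f) (hg : ContDiff ℝ 2 g)
    (p : ℝ × EuclideanSpace ℝ (Fin n)) :
    waveOp (fun q => f q + a * g q) p = waveOp f p + a * waveOp g p := by
  unfold waveOp partialT partialX
  simp only [fderiv_fderiv_add_const_mul_apply a hf hg, Finset.sum_add_distrib, ← Finset.mul_sum]
  ring

end Linearity

lemma waveOp_cexp_mul (L : (ℝ × EuclideanSpace ℝ (Fin n)) →L[ℝ] ℂ)
    {u : ℝ × EuclideanSpace ℝ (Fin n) → ℂ} (hu : ContDiff ℝ 2 u)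
    (p : ℝ × EuclideanSpace ℝ (Fin n)) :
    waveOp (fun q => Complex.exp (L q) * u q) p
      = Complex.exp (L p) *
          ((L (1, 0) ^ 2 - ∑ j : Fin n, L (0, EuclideanSpace.single j 1) ^ 2) * u p
            + 2 * (L (1, 0) * partialT u p
              - ∑ j : Fin n, L (0, EuclideanSpace.single j 1) * partialX j u p)
            + waveOp u p) := by
  unfold waveOp partialT partialX
  simp only [fderiv_fderiv_cexp_mul_apply L hu]
  simp only [← Finset.mul_sum, Finset.sum_add_distrib, ← Finset.sum_mul, sq]
  ring

noncomputable def phase (ξ : EuclideanSpace ℝ (Fin n)) : (ℝ × EuclideanSpace ℝ (Fin n)) →L[ℝ] ℝ :=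
  (innerSL ℝ ξ).comp (ContinuousLinearMap.snd ℝ ℝ _) - ContinuousLinearMap.fst ℝ ℝ _

lemma phase_apply (ξ : EuclideanSpace ℝ (Fin n)) (q : ℝ × EuclideanSpace ℝ (Fin n)) :
    phase ξ q = -q.1 + ⟪ξ, q.2⟫ := by
  simp [phase, neg_add_eq_sub]

lemma sum_ofReal_sq_eq_one {ξ : EuclideanSpace ℝ (Fin n)} (hξ : ‖ξ‖ = 1) :
    ∑ j : Fin n, (ξ j : ℂ) ^ 2 = 1 := by
  have h := EuclideanSpace.real_norm_sq_eq ξ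
  rw [hξ, one_pow] at h
  exact_mod_cast h.symm

lemma waveOp_planeWave_mul {ξ : EuclideanSpace ℝ (Fin n)} (hξ : ‖ξ‖ = 1) (τ : ℝ)
    {u : ℝ × EuclideanSpace ℝ (Fin n) → ℂ} (hu : ContDiff ℝ 2 u)
    (p : ℝ × EuclideanSpace ℝ (Fin n)) :
    waveOp (fun q => Complex.exp (Complex.I * τ * ((-q.1 + ⟪ξ, q.2⟫ : ℝ) : ℂ)) * u q) p
      = Complex.exp (Complex.I * τ * ((-p.1 + ⟪ξ, p.2⟫ : ℝ) : ℂ)) *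
          (-2 * Complex.I * τ * transportOp ξ u p + waveOp u p) := by
  set L := (Complex.I * τ) • (Complex.ofRealCLM.comp (phase ξ))
  have hL (q : ℝ × EuclideanSpace ℝ (Fin n)) :
      L q = Complex.I * τ * ((-q.1 + ⟪ξ, q.2⟫ : ℝ) : ℂ) := by
    simp [L, phase_apply]
  have hLt : L (1, 0) = -(Complex.I * τ) := by simp [hL]
  have hLx (j : Fin n) : L (0, EuclideanSpace.single j 1) = Complex.I * τ * ξ j := by
    simp [hL, EuclideanSpace.inner_single_right]
  simp only [← hL]
  rw [waveOp_cexp_mul L hu, hLt]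
  simp only [hLx, transportOp, mul_pow, mul_assoc (Complex.I * τ), ← Finset.mul_sum,
    sum_ofReal_sq_eq_one hξ]
  ring

end WaveOperator

theorem stmt4_general {n : ℕ} (ξ : EuclideanSpace ℝ (Fin n)) (hξ : ‖ξ‖ = 1)
    (τ : ℝ) (hτ : τ ≠ 0)
    (V : ℝ × EuclideanSpace ℝ (Fin n) → ℝ)
    (v₀ v₁ v₂ : ℝ × EuclideanSpace ℝ (Fin n) → ℂ)
    (hv₀ : ContDiff ℝ 2 v₀) (hv₁ : ContDiff ℝ 2 v₁) (hv₂ : ContDiff ℝ 2 v₂)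
    (ht₀ : ∀ p : ℝ × EuclideanSpace ℝ (Fin n),
      partialT v₀ p + ∑ j : Fin n, (ξ j : ℂ) * partialX j v₀ p = 0)
    (ht₁ : ∀ p : ℝ × EuclideanSpace ℝ (Fin n),
      -2 * Complex.I * (partialT v₁ p + ∑ j : Fin n, (ξ j : ℂ) * partialX j v₁ p)
        + (waveOp v₀ p + (V p : ℂ) * v₀ p) = 0)
    (ht₂ : ∀ p : ℝ × EuclideanSpace ℝ (Fin n),
      -2 * Complex.I * (partialT v₂ p + ∑ j : Fin n, (ξ j : ℂ) * partialX j v₂ p)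
        + (waveOp v₁ p + (V p : ℂ) * v₁ p) = 0) :
    ∀ p : ℝ × EuclideanSpace ℝ (Fin n),
      waveOp (fun q => Complex.exp (Complex.I * (τ : ℂ) * ((-q.1 + ⟪ξ, q.2⟫ : ℝ) : ℂ)) *
            (v₀ q + (τ : ℂ)⁻¹ * v₁ q + ((τ : ℂ) ^ 2)⁻¹ * v₂ q)) p
          + (V p : ℂ) *
            (Complex.exp (Complex.I * (τ : ℂ) * ((-p.1 + ⟪ξ, p.2⟫ : ℝ) : ℂ)) *
              (v₀ p + (τ : ℂ)⁻¹ * v₁ p + ((τ : ℂ) ^ 2)⁻¹ * v₂ p))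
        = ((τ : ℂ) ^ 2)⁻¹ * Complex.exp (Complex.I * (τ : ℂ) * ((-p.1 + ⟪ξ, p.2⟫ : ℝ) : ℂ)) *
            (waveOp v₂ p + (V p : ℂ) * v₂ p) := by
  intro p
  have hv₀₁ : ContDiff ℝ 2 (fun q => v₀ q + (τ : ℂ)⁻¹ * v₁ q) := hv₀.add (contDiff_const.mul hv₁)
  have hd {v : ℝ × EuclideanSpace ℝ (Fin n) → ℂ} (hv : ContDiff ℝ 2 v) :
      DifferentiableAt ℝ v p :=
    hv.differentiable two_ne_zero p
  rw [waveOp_planeWave_mul hξ τ (hv₀₁.add (contDiff_const.mul hv₂)),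
    transportOp_add_const_mul _ ξ (hd hv₀₁) (hd hv₂),
    transportOp_add_const_mul _ ξ (hd hv₀) (hd hv₁),
    waveOp_add_const_mul _ hv₀₁ hv₂, waveOp_add_const_mul _ hv₀ hv₁]
  have h₀ : transportOp ξ v₀ p = 0 := ht₀ p
  have h₁ : -2 * Complex.I * transportOp ξ v₁ p + (waveOp v₀ p + V p * v₀ p) = 0 := ht₁ p
  have h₂ : -2 * Complex.I * transportOp ξ v₂ p + (waveOp v₁ p + V p * v₁ p) = 0 := ht₂ p
  have hττ : (τ : ℂ) * (τ : ℂ)⁻¹ = 1 := mul_inv_cancel₀ (Complex.ofReal_ne_zero.mpr hτ)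
  set wave := Complex.exp (Complex.I * (τ : ℂ) * ((-p.1 + ⟪ξ, p.2⟫ : ℝ) : ℂ))
  linear_combination wave * (-2 * Complex.I * τ * h₀ + h₁ + (τ : ℂ)⁻¹ * h₂
    - 2 * Complex.I * (transportOp ξ v₁ p + (τ : ℂ)⁻¹ * transportOp ξ v₂ p) * hττ)

/-- If the amplitudes `v₀, v₁, v₂` satisfy the transport equations
`∂_t v₀ + ξ·∇_x v₀ = 0` and `−2i(∂_t v_k + ξ·∇_x v_k) + (□ + V)v_{k−1} = 0` for `k = 1,2`,
then the geometric optics ansatz `e^{iτφ}(v₀ + τ⁻¹v₁ + τ⁻²v₂)` with `φ(t,x) = −t + ξ·x`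
satisfies `(□ + V)(e^{iτφ}v) = τ⁻² e^{iτφ} (□ + V)v₂` everywhere. -/
theorem stmt4 {n : ℕ} (hn : 1 ≤ n) (ξ : EuclideanSpace ℝ (Fin n)) (hξ : ‖ξ‖ = 1)
    (τ : ℝ) (hτ : τ ≠ 0)
    (V : ℝ × EuclideanSpace ℝ (Fin n) → ℝ) (hV : Continuous V)
    (v₀ v₁ v₂ : ℝ × EuclideanSpace ℝ (Fin n) → ℂ)
    (hv₀ : ContDiff ℝ 2 v₀) (hv₁ : ContDiff ℝ 2 v₁) (hv₂ : ContDiff ℝ 2 v₂)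
    (ht₀ : ∀ p : ℝ × EuclideanSpace ℝ (Fin n),
      partialT v₀ p + ∑ j : Fin n, (ξ j : ℂ) * partialX j v₀ p = 0)
    (ht₁ : ∀ p : ℝ × EuclideanSpace ℝ (Fin n),
      -2 * Complex.I * (partialT v₁ p + ∑ j : Fin n, (ξ j : ℂ) * partialX j v₁ p)
        + (waveOp v₀ p + (V p : ℂ) * v₀ p) = 0)
    (ht₂ : ∀ p : ℝ × EuclideanSpace ℝ (Fin n),
      -2 * Complex.I * (partialT v₂ p + ∑ j : Fin n, (ξ j : ℂ) * partialX j v₂ p)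
        + (waveOp v₁ p + (V p : ℂ) * v₁ p) = 0) :
    ∀ p : ℝ × EuclideanSpace ℝ (Fin n),
      waveOp (fun q => Complex.exp (Complex.I * (τ : ℂ) * ((-q.1 + ⟪ξ, q.2⟫ : ℝ) : ℂ)) *
            (v₀ q + (τ : ℂ)⁻¹ * v₁ q + ((τ : ℂ) ^ 2)⁻¹ * v₂ q)) p
          + (V p : ℂ) *
            (Complex.exp (Complex.I * (τ : ℂ) * ((-p.1 + ⟪ξ, p.2⟫ : ℝ) : ℂ)) *
              (v₀ p + (τ : ℂ)⁻¹ * v₁ p + ((τ : ℂ) ^ 2)⁻¹ * v₂ p))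
        = ((τ : ℂ) ^ 2)⁻¹ * Complex.exp (Complex.I * (τ : ℂ) * ((-p.1 + ⟪ξ, p.2⟫ : ℝ) : ℂ)) *
            (waveOp v₂ p + (V p : ℂ) * v₂ p) :=
  stmt4_general ξ hξ τ hτ V v₀ v₁ v₂ hv₀ hv₁ hv₂ ht₀ ht₁ ht₂
end

section
/- Let n ≥ 1, let ξ ∈ ℝⁿ be a unit vector, (s₀, x₀) ∈ ℝ^{1+n}, and let H : ℝ^{1+n} → ℂ be continuous. Define σ(t,x) = (t − s₀ + (x − x₀)·ξ)/2 and w(t,x) = (2i)^{−1} ∫₀^{σ(t,x)} H((t,x) − (σ(t,x) − r)(1,ξ)) dr. Then: (a) w vanishes on the hyperplane Σ = {(t,x) : t − s₀ + (x − x₀)·ξ = 0}; and (b) for every (t,x) ∈ ℝ^{1+n}, the map s ↦ w((t,x) + s(1,ξ)) is differentiable at s = 0 with derivative (2i)^{−1} H(t,x); in other words w solves the characteristic ODE −2i (d/ds) w(γ(s)) + H(γ(s)) = 0 along every light ray γ(s) = γ(0) + s(1,ξ). -/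
/-!
Along the light ray `s ↦ p + s(1,ξ)` the phase `σ` grows with unit speed (because `|ξ| = 1`),
while the integrand `r ↦ H((p + s(1,ξ)) − (σ + s − r)(1,ξ))` does not depend on `s`. Hence
`w(p + s(1,ξ))` is `(2i)⁻¹` times a fixed integral up to `σ(p) + s`, and the fundamental theorem
of calculus differentiates it. On `Σ` the phase vanishes, so the integral is over `[0, 0]`.
-/

open Real MeasureTheory intervalIntegral

open scoped RealInnerProductSpace

section RayIntegral

variable {E F : Type*} [NormedAddCommGroup E] [NormedSpace ℝ E]
  [NormedAddCommGroup F] [NormedSpace ℝ F] [CompleteSpace F]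

theorem hasDerivAt_integral_comp_sub_smul {H : E → F} (hH : Continuous H) (v p : E) (a : ℝ) :
    HasDerivAt (fun s : ℝ => ∫ r in (0 : ℝ)..(a + s), H (p - (a - r) • v)) (H p) 0 := by
  have hg : Continuous fun r : ℝ => H (p - (a - r) • v) := by fun_prop
  have hFTC := integral_hasDerivAt_right (hg.intervalIntegrable 0 (a + 0))
    hg.stronglyMeasurable.stronglyMeasurableAtFilter hg.continuousAt
  simpa using hFTC.comp_const_add a 0

theorem hasDerivAt_integral_along_ray {H : E → F} (hH : Continuous H) {v : E} {σ : E → ℝ}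
    (p : E) (hσ : ∀ s : ℝ, σ (p + s • v) = σ p + s) :
    HasDerivAt
      (fun s : ℝ => ∫ r in (0 : ℝ)..σ (p + s • v), H (p + s • v - (σ (p + s • v) - r) • v))
      (H p) 0 := by
  have hshift : ∀ s r : ℝ, p + s • v - (σ p + s - r) • v = p - (σ p - r) • v := by
    intro s r
    rw [show σ p + s - r = (σ p - r) + s by ring, add_smul]
    abel
  simp only [hσ, hshift]
  exact hasDerivAt_integral_comp_sub_smul hH v p (σ p)

end RayIntegral

theorem phase_add_smul_lightRay {n : ℕ} {ξ : EuclideanSpace ℝ (Fin n)} (hξ : ‖ξ‖ = 1)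
    (s₀ : ℝ) (x₀ : EuclideanSpace ℝ (Fin n)) (p : ℝ × EuclideanSpace ℝ (Fin n)) (s : ℝ) :
    (p + s • ((1 : ℝ), ξ)).1 - s₀ + ⟪(p + s • ((1 : ℝ), ξ)).2 - x₀, ξ⟫
      = p.1 - s₀ + ⟪p.2 - x₀, ξ⟫ + 2 * s := by
  have hinner : ⟪p.2 + s • ξ - x₀, ξ⟫ = ⟪p.2 - x₀, ξ⟫ + s := by
    rw [show p.2 + s • ξ - x₀ = (p.2 - x₀) + s • ξ by abel, inner_add_left,
      real_inner_smul_left, real_inner_self_eq_norm_sq, hξ]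
    ring
  simp only [Prod.fst_add, Prod.snd_add, Prod.smul_fst, Prod.smul_snd, smul_eq_mul, mul_one,
    hinner]
  ring

theorem stmt5_general {n : ℕ} (ξ : EuclideanSpace ℝ (Fin n)) (hξ : ‖ξ‖ = 1)
    (s₀ : ℝ) (x₀ : EuclideanSpace ℝ (Fin n))
    (H : ℝ × EuclideanSpace ℝ (Fin n) → ℂ) (hH : Continuous H)
    (σ : ℝ × EuclideanSpace ℝ (Fin n) → ℝ)
    (hσ : ∀ p : ℝ × EuclideanSpace ℝ (Fin n), σ p = (p.1 - s₀ + ⟪p.2 - x₀, ξ⟫) / 2)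
    (w : ℝ × EuclideanSpace ℝ (Fin n) → ℂ)
    (hw : ∀ p : ℝ × EuclideanSpace ℝ (Fin n),
      w p = (2 * Complex.I)⁻¹ * ∫ r in (0 : ℝ)..(σ p), H (p - (σ p - r) • ((1 : ℝ), ξ))) :
    (∀ p : ℝ × EuclideanSpace ℝ (Fin n), p.1 - s₀ + ⟪p.2 - x₀, ξ⟫ = 0 → w p = 0) ∧
      (∀ p : ℝ × EuclideanSpace ℝ (Fin n),
        HasDerivAt (fun s : ℝ => w (p + s • ((1 : ℝ), ξ))) ((2 * Complex.I)⁻¹ * H p) 0) := by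
  refine ⟨fun p hp => ?_, fun p => ?_⟩
  · rw [hw, hσ, hp, zero_div, integral_same, mul_zero]
  · have hσ_ray : ∀ s : ℝ, σ (p + s • ((1 : ℝ), ξ)) = σ p + s := fun s => by
      rw [hσ, hσ, phase_add_smul_lightRay hξ]
      ring
    simp only [hw]
    exact (hasDerivAt_integral_along_ray hH p hσ_ray).const_mul _

/-- With `σ(t,x) = (t − s₀ + (x − x₀)·ξ)/2` and
`w(t,x) = (2i)⁻¹ ∫₀^{σ(t,x)} H((t,x) − (σ(t,x) − r)(1,ξ)) dr`:
(a) `w` vanishes on the hyperplane `Σ = {(t,x) : t − s₀ + (x − x₀)·ξ = 0}`, and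
(b) along every light ray `s ↦ (t,x) + s(1,ξ)` the map `s ↦ w((t,x) + s(1,ξ))` is
differentiable at `s = 0` with derivative `(2i)⁻¹ H(t,x)`. -/
theorem stmt5 {n : ℕ} (hn : 1 ≤ n) (ξ : EuclideanSpace ℝ (Fin n)) (hξ : ‖ξ‖ = 1)
    (s₀ : ℝ) (x₀ : EuclideanSpace ℝ (Fin n))
    (H : ℝ × EuclideanSpace ℝ (Fin n) → ℂ) (hH : Continuous H)
    (σ : ℝ × EuclideanSpace ℝ (Fin n) → ℝ)
    (hσ : ∀ p : ℝ × EuclideanSpace ℝ (Fin n), σ p = (p.1 - s₀ + ⟪p.2 - x₀, ξ⟫) / 2)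
    (w : ℝ × EuclideanSpace ℝ (Fin n) → ℂ)
    (hw : ∀ p : ℝ × EuclideanSpace ℝ (Fin n),
      w p = (2 * Complex.I)⁻¹ * ∫ r in (0 : ℝ)..(σ p), H (p - (σ p - r) • ((1 : ℝ), ξ))) :
    (∀ p : ℝ × EuclideanSpace ℝ (Fin n), p.1 - s₀ + ⟪p.2 - x₀, ξ⟫ = 0 → w p = 0) ∧
      (∀ p : ℝ × EuclideanSpace ℝ (Fin n),
        HasDerivAt (fun s : ℝ => w (p + s • ((1 : ℝ), ξ))) ((2 * Complex.I)⁻¹ * H p) 0) :=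
  stmt5_general ξ hξ s₀ x₀ H hH σ hσ w hw
end

section
/- Let n ≥ 1, let {ξ, e₁, …, e_{n−1}} be an orthonormal basis of ℝⁿ, let λ > 0, (s₀, x₀) ∈ ℝ^{1+n}, and let χ : ℝ → ℝ satisfy χ(u) = 0 whenever |u| ≥ 1/(4√n). Define v : ℝ^{1+n} → ℝ by v(t,x) = χ(λ(s₀ − t + (x − x₀)·ξ)) ∏_{k=1}^{n−1} χ(λ (x − x₀)·e_k). Then v(t,x) = 0 whenever the Euclidean distance from (t,x) to the light ray {(s₀ + s, x₀ + s ξ) : s ∈ ℝ} ⊆ ℝ^{1+n} is at least 1/(4λ). In other words, v is supported in the closed tube of radius 1/(4λ) around the light ray through (s₀,x₀) with direction (1,ξ). -/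
open Real

open scoped RealInnerProductSpace

/-! If `v p ≠ 0`, every cutoff factor is nonzero, so all `n = m + 1` numbers
`λ(s₀ − t + ⟪y, ξ⟫)` and `λ⟪y, e k⟫` (with `y = x − x₀`) are smaller than `1/(4√n)` in absolute
value. Taking the ray parameter `s = ⟪y, ξ⟫`, Parseval's identity for the orthonormal basis
`{ξ, e₁, …, e_{n−1}}` shows that the squared distance from `p` to the ray point at `s` is exactly
the sum of the squares of these `n` numbers divided by `λ²`, hence smaller than `1/(16λ²)`. -/

section Parseval

variable {E : Type*} [NormedAddCommGroup E] [InnerProductSpace ℝ E]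

theorem Orthonormal.sum_sq_inner_of_card_eq_finrank [FiniteDimensional ℝ E] {ι : Type*}
    [Fintype ι] {v : ι → E} (hv : Orthonormal ℝ v) (hcard : Fintype.card ι = Module.finrank ℝ E)
    (x : E) : ∑ i, ⟪x, v i⟫ ^ 2 = ‖x‖ ^ 2 := by
  let b := OrthonormalBasis.mk hv (hv.linearIndependent.span_eq_top_of_card_eq_finrank' hcard).ge
  simpa [b] using b.sum_sq_inner_left x

theorem norm_sub_inner_smul_sq_of_norm_eq_one {ξ : E} (hξ : ‖ξ‖ = 1) (y : E) :
    ‖y - ⟪y, ξ⟫ • ξ‖ ^ 2 = ‖y‖ ^ 2 - ⟪y, ξ⟫ ^ 2 := by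
  rw [norm_sub_sq_real, real_inner_smul_right, norm_smul, hξ, mul_one, Real.norm_eq_abs, sq_abs]
  ring

theorem norm_sub_inner_smul_sq_eq_sum_sq_inner [FiniteDimensional ℝ E] {m : ℕ} {ξ : E}
    {e : Fin m → E} (hON : Orthonormal ℝ (Fin.cons ξ e : Fin (m + 1) → E))
    (hcard : Module.finrank ℝ E = m + 1) (y : E) :
    ‖y - ⟪y, ξ⟫ • ξ‖ ^ 2 = ∑ k, ⟪y, e k⟫ ^ 2 := by
  have hparseval := hON.sum_sq_inner_of_card_eq_finrank (by simp [hcard]) y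
  rw [Fin.sum_univ_succ] at hparseval
  simp only [Fin.cons_zero, Fin.cons_succ] at hparseval
  rw [norm_sub_inner_smul_sq_of_norm_eq_one (by simpa using hON.1 0), ← hparseval]
  ring

end Parseval

theorem sqrt_sum_sq_lt_of_forall_abs_lt {ι : Type*} [Fintype ι] [Nonempty ι] {a : ι → ℝ}
    {r : ℝ} (h : ∀ i, |a i| < r / √(Fintype.card ι)) : √(∑ i, a i ^ 2) < r := by
  have hcard : (0 : ℝ) < Fintype.card ι := by exact_mod_cast Fintype.card_pos
  have hr : 0 < r := by
    have := (abs_nonneg _).trans_lt (h (Classical.arbitrary ι))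
    exact (div_pos_iff_of_pos_right (by positivity)).1 this
  rw [sqrt_lt' hr]
  calc ∑ i, a i ^ 2 < ∑ _i : ι, (r / √(Fintype.card ι)) ^ 2 := by
        refine Finset.sum_lt_sum_of_nonempty Finset.univ_nonempty fun i _ => ?_
        rw [← sq_abs]
        exact pow_lt_pow_left₀ (h i) (abs_nonneg _) two_ne_zero
    _ = r ^ 2 := by
        rw [Finset.sum_const, Finset.card_univ, nsmul_eq_mul, div_pow, sq_sqrt hcard.le]
        field_simp

/-- With `{ξ, e₁, …, e_m}` an orthonormal basis of `ℝⁿ` (`n = m + 1 ≥ 1`),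
`λ > 0`, and `χ` vanishing outside `(−1/(4√n), 1/(4√n))`, the function
`v(t,x) = χ(λ(s₀ − t + (x − x₀)·ξ)) ∏_k χ(λ(x − x₀)·e_k)` vanishes at every spacetime point
whose Euclidean distance to the light ray `{(s₀ + s, x₀ + s ξ)}` is at least `1/(4λ)`:
`v` is supported in the closed tube of radius `1/(4λ)` around the ray. -/
theorem stmt14 {m : ℕ} (ξ : EuclideanSpace ℝ (Fin (m + 1)))
    (e : Fin m → EuclideanSpace ℝ (Fin (m + 1)))
    (hON : Orthonormal ℝ (Fin.cons ξ e : Fin (m + 1) → EuclideanSpace ℝ (Fin (m + 1))))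
    (lam : ℝ) (hlam : 0 < lam) (s₀ : ℝ) (x₀ : EuclideanSpace ℝ (Fin (m + 1)))
    (χ : ℝ → ℝ) (hχ : ∀ u : ℝ, 1 / (4 * Real.sqrt (m + 1)) ≤ |u| → χ u = 0)
    (v : ℝ × EuclideanSpace ℝ (Fin (m + 1)) → ℝ)
    (hv : ∀ p : ℝ × EuclideanSpace ℝ (Fin (m + 1)),
      v p = χ (lam * (s₀ - p.1 + ⟪p.2 - x₀, ξ⟫)) *
        ∏ k : Fin m, χ (lam * ⟪p.2 - x₀, e k⟫)) :
    ∀ p : ℝ × EuclideanSpace ℝ (Fin (m + 1)),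
      (∀ s : ℝ, 1 / (4 * lam) ≤
        Real.sqrt ((p.1 - (s₀ + s)) ^ 2 + ‖p.2 - (x₀ + s • ξ)‖ ^ 2)) →
      v p = 0 := by
  intro p hp
  by_contra hvp
  obtain ⟨hχξ, hχe⟩ := mul_ne_zero_iff.1 (hv p ▸ hvp)
  set y := p.2 - x₀
  set s := ⟪y, ξ⟫
  let w : Fin (m + 1) → ℝ := Fin.cons (s₀ - p.1 + s) fun k => ⟪y, e k⟫
  have hsmall : ∀ i, |w i| < 1 / (4 * lam) / √(Fintype.card (Fin (m + 1))) := by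
    have hlt {u : ℝ} (hu : χ (lam * u) ≠ 0) :
        |u| < 1 / (4 * lam) / √(Fintype.card (Fin (m + 1))) := by
      have hu' := not_le.1 (mt (hχ _) hu)
      rw [abs_mul, abs_of_pos hlam, lt_div_iff₀ (by positivity)] at hu'
      rw [Fintype.card_fin, Nat.cast_add_one, div_div, lt_div_iff₀ (by positivity)]
      linarith
    exact Fin.cases (hlt hχξ) fun k => hlt (Finset.prod_ne_zero_iff.1 hχe k (Finset.mem_univ k))
  have hdist : (p.1 - (s₀ + s)) ^ 2 + ‖p.2 - (x₀ + s • ξ)‖ ^ 2 = ∑ i, w i ^ 2 := by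
    rw [sub_add_eq_sub_sub p.2]
    change _ + ‖y - s • ξ‖ ^ 2 = _
    rw [norm_sub_inner_smul_sq_eq_sum_sq_inner hON finrank_euclideanSpace_fin, Fin.sum_univ_succ]
    simp only [w, Fin.cons_zero, Fin.cons_succ]
    ring
  exact (hp s).not_gt (hdist ▸ sqrt_sum_sq_lt_of_forall_abs_lt hsmall)
end
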